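/- If a BK-puzzle of size n has boundary words π (NW side), ρ (NE side), and σ (S side), all read left to right, then π, ρ, and σ have the same content: for each letter i, the number of occurrences of i is the same on all three sides. -/
import Mathlib


/-!  Combinatorial model of BK-puzzles.

A BK-puzzle of size `n` is a tiling of an upward triangle of side `n` in the
triangular lattice by unit triangles, all of whose edges carry the same single
label `i`, and by unit rhombi with edge labels `i,j,i,j` (`i > j`); rhombi may be
rotated but not reflected, and adjacent pieces must have matching edge labels.

We use lattice coordinates: vertices are `(a,b)` with `a + b ≤ n`, the vertex
`(a,b)` sitting at planar position `(a + b/2, b·√3/2)`; so `(0,0)` is the SW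
corner, `(n,0)` the SE corner and `(0,n)` the top (N) corner.  Edges:
* `hl a b` : the horizontal edge from `(a,b)` to `(a+1,b)`  (for `a+b < n`);
* `ll a b` : the `/`-edge from `(a,b)` to `(a,b+1)`         (for `a+b < n`);
* `rl a b` : the `\`-edge from `(a+1,b)` to `(a,b+1)`       (for `a+b < n`).

A rhombus is recorded by labelling its internal (short) diagonal with the pair
`Lbl.pair i j` (`i > j`); its two unit-triangle halves are then constrained by
`upOK` / `downOK` below, which list the unit triangle `(i,i,i)` together with the
three rotations of the rhombus (one for each direction of the internal diagonal),
with the orientation (chirality) convention of Knutson–Purbhoo: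
* internal diagonal `\` (NE/SW-pointing rhombus): horizontal edges `i`, `/`-edges `j`;
* internal diagonal `/` (NW/SE-pointing rhombus): horizontal edges `j`, `\`-edges `i`;
* internal diagonal horizontal (N/S-pointing rhombus): `/`-edges `i`, `\`-edges `j`.
-/

/-- An edge label: a single letter, or a pair `(i,j)` (with `i > j`) marking the
internal diagonal of an `(i,j)`-rhombus. -/
inductive Lbl where
  | single (i : ℕ)
  | pair (i j : ℕ)
deriving DecidableEq

/-- Allowed labelings `(bottom, left, right)` of an upward unit triangle. -/
def upOK : Lbl → Lbl → Lbl → Prop := fun B L R =>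
  (∃ i, B = .single i ∧ L = .single i ∧ R = .single i) ∨
  (∃ i j, j < i ∧ B = .single i ∧ L = .single j ∧ R = .pair i j) ∨
  (∃ i j, j < i ∧ B = .single j ∧ L = .pair i j ∧ R = .single i) ∨
  (∃ i j, j < i ∧ B = .pair i j ∧ L = .single i ∧ R = .single j)

/-- Allowed labelings `(top, left, right)` of a downward unit triangle. -/
def downOK : Lbl → Lbl → Lbl → Prop := fun T L R =>
  (∃ i, T = .single i ∧ L = .single i ∧ R = .single i) ∨
  (∃ i j, j < i ∧ T = .single i ∧ L = .pair i j ∧ R = .single j) ∨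
  (∃ i j, j < i ∧ T = .single j ∧ L = .single i ∧ R = .pair i j) ∨
  (∃ i j, j < i ∧ T = .pair i j ∧ L = .single j ∧ R = .single i)

/-- A BK-puzzle of size `n`: a labeling of all lattice edges of the size-`n`
triangle such that every upward and downward unit triangle is (half of) a legal
puzzle piece, with matching labels on shared edges. -/
structure BKPuzzle (n : ℕ) where
  hl : ℕ → ℕ → Lbl
  ll : ℕ → ℕ → Lbl
  rl : ℕ → ℕ → Lbl
  up_ok : ∀ a b, a + b < n → upOK (hl a b) (ll a b) (rl a b)
  down_ok : ∀ a b, a + b + 1 < n → downOK (hl a (b + 1)) (rl a b) (ll (a + 1) b)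

/-- `HasBoundary P π ρ σ` : the puzzle `P` has boundary word `π` on the NW side,
`ρ` on the NE side and `σ` on the S side, all read left to right (NW: bottom to
top; NE: top to bottom; S: west to east). -/
def HasBoundary {n : ℕ} (P : BKPuzzle n) (π ρ σ : List ℕ) : Prop :=
  π.length = n ∧ ρ.length = n ∧ σ.length = n ∧
  (∀ b, b < n → P.ll 0 b = Lbl.single (π.getD b 0)) ∧
  (∀ a, a < n → P.rl a (n - 1 - a) = Lbl.single (ρ.getD a 0)) ∧
  (∀ a, a < n → P.hl a 0 = Lbl.single (σ.getD a 0))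

/-- Number of `(i,j)`-rhombi whose internal diagonal is horizontal, i.e. whose
acute corners point North and South ("a corner pointing South"). -/
def southPointingCount {n : ℕ} (P : BKPuzzle n) (i j : ℕ) : ℕ :=
  ((Finset.range n ×ˢ Finset.range n).filter
    (fun ab => ab.1 + ab.2 < n ∧ P.hl ab.1 ab.2 = Lbl.pair i j)).card

/-- Number of `(i,j)`-rhombi whose internal diagonal is a `/`-edge, i.e. whose
acute corners point NW and SE ("a corner pointing NW"). -/
def nwPointingCount {n : ℕ} (P : BKPuzzle n) (i j : ℕ) : ℕ :=
  ((Finset.range n ×ˢ Finset.range n).filter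
    (fun ab => ab.1 + ab.2 < n ∧ P.ll ab.1 ab.2 = Lbl.pair i j)).card

/-- Number of `(i,j)`-rhombi whose internal diagonal is a `\`-edge, i.e. whose
acute corners point NE and SW ("a corner pointing NE"). -/
def nePointingCount {n : ℕ} (P : BKPuzzle n) (i j : ℕ) : ℕ :=
  ((Finset.range n ×ˢ Finset.range n).filter
    (fun ab => ab.1 + ab.2 < n ∧ P.rl ab.1 ab.2 = Lbl.pair i j)).card

/-- Total number of `(i,j)`-rhombi in the puzzle. -/
def rhombiCount {n : ℕ} (P : BKPuzzle n) (i j : ℕ) : ℕ :=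
  southPointingCount P i j + nwPointingCount P i j + nePointingCount P i j

/-- Number of upward-pointing `i`-triangles. -/
def upTriCount {n : ℕ} (P : BKPuzzle n) (i : ℕ) : ℕ :=
  ((Finset.range n ×ˢ Finset.range n).filter
    (fun ab => ab.1 + ab.2 < n ∧ P.hl ab.1 ab.2 = Lbl.single i ∧
      P.ll ab.1 ab.2 = Lbl.single i ∧ P.rl ab.1 ab.2 = Lbl.single i)).card

/-- Number of downward-pointing `i`-triangles. -/
def downTriCount {n : ℕ} (P : BKPuzzle n) (i : ℕ) : ℕ :=
  ((Finset.range n ×ˢ Finset.range n).filter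
    (fun ab => ab.1 + ab.2 + 1 < n ∧ P.hl ab.1 (ab.2 + 1) = Lbl.single i ∧
      P.rl ab.1 ab.2 = Lbl.single i ∧ P.ll (ab.1 + 1) ab.2 = Lbl.single i)).card

namespace BKContent

open Finset

/-- Reindexing: split the triangular region along the bottom row. -/
lemma splitH (n : ℕ) (F : ℕ → ℕ → ℤ) :
    ∑ p ∈ (range n ×ˢ range n).filter (fun p => p.1 + p.2 < n), F p.1 p.2
      = (∑ a ∈ range n, F a 0)
        + ∑ p ∈ (range n ×ˢ range n).filter (fun p => p.1 + p.2 + 1 < n), F p.1 (p.2 + 1) := by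
  rw [← Finset.sum_filter_add_sum_filter_not
      ((range n ×ˢ range n).filter (fun p => p.1 + p.2 < n)) (fun p => p.2 = 0)]
  congr 1
  · have himg : (range n).image (fun a : ℕ => ((a, 0) : ℕ × ℕ))
        = ((range n ×ˢ range n).filter (fun p => p.1 + p.2 < n)).filter (fun p => p.2 = 0) := by
      ext ⟨a, b⟩
      simp only [Finset.mem_image, Finset.mem_filter, Finset.mem_product, Finset.mem_range,
        Prod.mk.injEq]
      constructor
      · rintro ⟨c, hc, rfl, rfl⟩; omega
      · rintro ⟨⟨⟨h1, h2⟩, h3⟩, h4⟩; exact ⟨a, by omega, rfl, h4.symm⟩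
    have := (Finset.sum_image (f := fun p : ℕ × ℕ => F p.1 p.2)
        (g := fun a : ℕ => ((a, 0) : ℕ × ℕ)) (s := range n)
        (by intro x _ y _ h; simpa using h))
    rw [himg] at this
    rw [← this]
  · have himg : ((range n ×ˢ range n).filter (fun p => p.1 + p.2 + 1 < n)).image
        (fun p : ℕ × ℕ => (p.1, p.2 + 1))
        = ((range n ×ˢ range n).filter (fun p => p.1 + p.2 < n)).filter (fun p => ¬ p.2 = 0) := by
      ext ⟨a, b⟩
      simp only [Finset.mem_image, Finset.mem_filter, Finset.mem_product, Finset.mem_range,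
        Prod.mk.injEq, Prod.exists]
      constructor
      · rintro ⟨c, d, ⟨⟨h1, h2⟩, h3⟩, rfl, rfl⟩; omega
      · rintro ⟨⟨⟨h1, h2⟩, h3⟩, h4⟩; exact ⟨a, b - 1, by omega, by omega, by omega⟩
    have := (Finset.sum_image (f := fun p : ℕ × ℕ => F p.1 p.2)
        (g := fun p : ℕ × ℕ => (p.1, p.2 + 1))
        (s := (range n ×ˢ range n).filter (fun p => p.1 + p.2 + 1 < n))
        (by rintro ⟨a, b⟩ _ ⟨c, d⟩ _ h; simpa [Prod.ext_iff] using h))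
    rw [himg] at this
    rw [← this]

/-- Reindexing: split the triangular region along the left (NW) column. -/
lemma splitF (n : ℕ) (F : ℕ → ℕ → ℤ) :
    ∑ p ∈ (range n ×ˢ range n).filter (fun p => p.1 + p.2 < n), F p.1 p.2
      = (∑ b ∈ range n, F 0 b)
        + ∑ p ∈ (range n ×ˢ range n).filter (fun p => p.1 + p.2 + 1 < n), F (p.1 + 1) p.2 := by
  rw [← Finset.sum_filter_add_sum_filter_not
      ((range n ×ˢ range n).filter (fun p => p.1 + p.2 < n)) (fun p => p.1 = 0)]
  congr 1
  · have himg : (range n).image (fun b : ℕ => ((0, b) : ℕ × ℕ))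
        = ((range n ×ˢ range n).filter (fun p => p.1 + p.2 < n)).filter (fun p => p.1 = 0) := by
      ext ⟨a, b⟩
      simp only [Finset.mem_image, Finset.mem_filter, Finset.mem_product, Finset.mem_range,
        Prod.mk.injEq]
      constructor
      · rintro ⟨c, hc, rfl, rfl⟩; omega
      · rintro ⟨⟨⟨h1, h2⟩, h3⟩, h4⟩; exact ⟨b, by omega, h4.symm, rfl⟩
    have := (Finset.sum_image (f := fun p : ℕ × ℕ => F p.1 p.2)
        (g := fun b : ℕ => ((0, b) : ℕ × ℕ)) (s := range n)
        (by intro x _ y _ h; simpa using h))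
    rw [himg] at this
    rw [← this]
  · have himg : ((range n ×ˢ range n).filter (fun p => p.1 + p.2 + 1 < n)).image
        (fun p : ℕ × ℕ => (p.1 + 1, p.2))
        = ((range n ×ˢ range n).filter (fun p => p.1 + p.2 < n)).filter (fun p => ¬ p.1 = 0) := by
      ext ⟨a, b⟩
      simp only [Finset.mem_image, Finset.mem_filter, Finset.mem_product, Finset.mem_range,
        Prod.mk.injEq, Prod.exists]
      constructor
      · rintro ⟨c, d, ⟨⟨h1, h2⟩, h3⟩, rfl, rfl⟩; omega
      · rintro ⟨⟨⟨h1, h2⟩, h3⟩, h4⟩; exact ⟨a - 1, b, by omega, by omega, by omega⟩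
    have := (Finset.sum_image (f := fun p : ℕ × ℕ => F p.1 p.2)
        (g := fun p : ℕ × ℕ => (p.1 + 1, p.2))
        (s := (range n ×ˢ range n).filter (fun p => p.1 + p.2 + 1 < n))
        (by rintro ⟨a, b⟩ _ ⟨c, d⟩ _ h; simpa [Prod.ext_iff] using h))
    rw [himg] at this
    rw [← this]

/-- Reindexing: split the triangular region along the NE diagonal. -/
lemma splitG (n : ℕ) (F : ℕ → ℕ → ℤ) :
    ∑ p ∈ (range n ×ˢ range n).filter (fun p => p.1 + p.2 < n), F p.1 p.2
      = (∑ a ∈ range n, F a (n - 1 - a))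
        + ∑ p ∈ (range n ×ˢ range n).filter (fun p => p.1 + p.2 + 1 < n), F p.1 p.2 := by
  rw [← Finset.sum_filter_add_sum_filter_not
      ((range n ×ˢ range n).filter (fun p => p.1 + p.2 < n)) (fun p => ¬ p.1 + p.2 + 1 < n)]
  congr 1
  · have himg : (range n).image (fun a : ℕ => ((a, n - 1 - a) : ℕ × ℕ))
        = ((range n ×ˢ range n).filter (fun p => p.1 + p.2 < n)).filter
            (fun p => ¬ p.1 + p.2 + 1 < n) := by
      ext ⟨a, b⟩
      simp only [Finset.mem_image, Finset.mem_filter, Finset.mem_product, Finset.mem_range,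
        Prod.mk.injEq]
      constructor
      · rintro ⟨c, hc, rfl, rfl⟩; omega
      · rintro ⟨⟨⟨h1, h2⟩, h3⟩, h4⟩; exact ⟨a, by omega, rfl, by omega⟩
    have := (Finset.sum_image (f := fun p : ℕ × ℕ => F p.1 p.2)
        (g := fun a : ℕ => ((a, n - 1 - a) : ℕ × ℕ)) (s := range n)
        (by intro x _ y _ h; exact (by simpa [Prod.ext_iff] using h : x = y ∧ _).1))
    rw [himg] at this
    rw [← this]
  · apply Finset.sum_congr _ (fun _ _ => rfl)
    ext ⟨a, b⟩
    simp only [Finset.mem_filter, Finset.mem_product, Finset.mem_range, not_not]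
    constructor
    · rintro ⟨⟨⟨h1, h2⟩, h3⟩, h4⟩; exact ⟨⟨h1, h2⟩, h4⟩
    · rintro ⟨⟨h1, h2⟩, h3⟩; exact ⟨⟨⟨h1, h2⟩, by omega⟩, h3⟩

/-- The master conservation/flux lemma: if the weights `h`, `f`, `g` satisfy the
local conservation law on every legal up- and down-triangle, then the total
boundary flux of a puzzle vanishes. -/
lemma flux {n : ℕ} (P : BKPuzzle n) (h f g : Lbl → ℤ)
    (hup : ∀ B L R, upOK B L R → h B + f L - g R = 0)
    (hdn : ∀ T L R, downOK T L R → g L - h T - f R = 0) :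
    (∑ a ∈ range n, h (P.hl a 0)) + (∑ b ∈ range n, f (P.ll 0 b))
      - (∑ a ∈ range n, g (P.rl a (n - 1 - a))) = 0 := by
  have hz1 : ∑ p ∈ (range n ×ˢ range n).filter (fun p => p.1 + p.2 < n),
      (h (P.hl p.1 p.2) + f (P.ll p.1 p.2) - g (P.rl p.1 p.2)) = 0 := by
    apply Finset.sum_eq_zero
    rintro ⟨a, b⟩ hp
    simp only [Finset.mem_filter] at hp
    exact hup _ _ _ (P.up_ok a b hp.2)
  have hz2 : ∑ p ∈ (range n ×ˢ range n).filter (fun p => p.1 + p.2 + 1 < n),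
      (g (P.rl p.1 p.2) - h (P.hl p.1 (p.2 + 1)) - f (P.ll (p.1 + 1) p.2)) = 0 := by
    apply Finset.sum_eq_zero
    rintro ⟨a, b⟩ hp
    simp only [Finset.mem_filter] at hp
    exact hdn _ _ _ (P.down_ok a b hp.2)
  have e1 := splitH n (fun a b => h (P.hl a b))
  have e2 := splitF n (fun a b => f (P.ll a b))
  have e3 := splitG n (fun a b => g (P.rl a b))
  rw [Finset.sum_sub_distrib, Finset.sum_add_distrib] at hz1
  rw [Finset.sum_sub_distrib, Finset.sum_sub_distrib] at hz2
  linarith [hz1, hz2, e1, e2, e3]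

/-- Counting occurrences in a list via `getD`. -/
lemma count_eq_sum (l : List ℕ) (i : ℕ) :
    (l.count i : ℤ) = ∑ k ∈ range l.length, (if l.getD k 0 = i then (1 : ℤ) else 0) := by
  induction l with
  | nil => simp
  | cons a t ih =>
    rw [List.length_cons, Finset.sum_range_succ']
    simp only [List.getD_cons_succ, List.getD_cons_zero]
    rw [List.count_cons, ← ih]
    push_cast
    by_cases hai : a = i <;> simp [hai, add_comm]

/-! Weight schemes.  For a fixed target letter `t` we choose integer weights on
labels so that the local conservation law holds on every puzzle piece; the flux
lemma then equates boundary counts.  Scheme 1 compares the S and NE sides,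
scheme 2 the NW and S sides. -/

def w1h (t : ℕ) : Lbl → ℤ
  | .single k => if k = t then 1 else 0
  | .pair _ j => if j = t then 1 else 0

def w1f (t : ℕ) : Lbl → ℤ
  | .single _ => 0
  | .pair i j => (if i = t then 1 else 0) - (if j = t then 1 else 0)

def w1g (t : ℕ) : Lbl → ℤ
  | .single k => if k = t then 1 else 0
  | .pair i _ => if i = t then 1 else 0

def w2h (t : ℕ) : Lbl → ℤ
  | .single k => -(if k = t then 1 else 0)
  | .pair i _ => -(if i = t then 1 else 0)

def w2f (t : ℕ) : Lbl → ℤ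
  | .single k => if k = t then 1 else 0
  | .pair _ j => if j = t then 1 else 0

def w2g (t : ℕ) : Lbl → ℤ
  | .single _ => 0
  | .pair i j => (if j = t then 1 else 0) - (if i = t then 1 else 0)

lemma w1_up (t : ℕ) : ∀ B L R, upOK B L R → w1h t B + w1f t L - w1g t R = 0 := by
  rintro B L R (⟨k, rfl, rfl, rfl⟩ | ⟨i, j, _, rfl, rfl, rfl⟩ | ⟨i, j, _, rfl, rfl, rfl⟩ |
    ⟨i, j, _, rfl, rfl, rfl⟩) <;> simp [w1h, w1f, w1g] <;> ring

lemma w1_down (t : ℕ) : ∀ T L R, downOK T L R → w1g t L - w1h t T - w1f t R = 0 := by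
  rintro T L R (⟨k, rfl, rfl, rfl⟩ | ⟨i, j, _, rfl, rfl, rfl⟩ | ⟨i, j, _, rfl, rfl, rfl⟩ |
    ⟨i, j, _, rfl, rfl, rfl⟩) <;> simp [w1h, w1f, w1g] <;> ring

lemma w2_up (t : ℕ) : ∀ B L R, upOK B L R → w2h t B + w2f t L - w2g t R = 0 := by
  rintro B L R (⟨k, rfl, rfl, rfl⟩ | ⟨i, j, _, rfl, rfl, rfl⟩ | ⟨i, j, _, rfl, rfl, rfl⟩ |
    ⟨i, j, _, rfl, rfl, rfl⟩) <;> simp [w2h, w2f, w2g] <;> ring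

lemma w2_down (t : ℕ) : ∀ T L R, downOK T L R → w2g t L - w2h t T - w2f t R = 0 := by
  rintro T L R (⟨k, rfl, rfl, rfl⟩ | ⟨i, j, _, rfl, rfl, rfl⟩ | ⟨i, j, _, rfl, rfl, rfl⟩ |
    ⟨i, j, _, rfl, rfl, rfl⟩) <;> simp [w2h, w2f, w2g] <;> ring

end BKContent

/-- the three boundary words of a BK-puzzle have the same content:
each letter occurs the same number of times on all three sides. -/
theorem boundary_same_content {n : ℕ} (P : BKPuzzle n) (π ρ σ : List ℕ)
    (h : HasBoundary P π ρ σ) :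
    ∀ i, π.count i = σ.count i ∧ ρ.count i = σ.count i := by
  intro i
  obtain ⟨hπ, hρ, hσ, hNW, hNE, hS⟩ := h
  open Finset BKContent in
  have key : ∀ (wh wf wg : Lbl → ℤ),
      (∀ B L R, upOK B L R → wh B + wf L - wg R = 0) →
      (∀ T L R, downOK T L R → wg L - wh T - wf R = 0) →
      (∑ a ∈ range n, wh (Lbl.single (σ.getD a 0)))
        + (∑ b ∈ range n, wf (Lbl.single (π.getD b 0)))
        - (∑ a ∈ range n, wg (Lbl.single (ρ.getD a 0))) = 0 := by
    intro wh wf wg hup hdn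
    have hfl := BKContent.flux P wh wf wg hup hdn
    have eS : ∑ a ∈ range n, wh (P.hl a 0) = ∑ a ∈ range n, wh (Lbl.single (σ.getD a 0)) :=
      Finset.sum_congr rfl (fun a ha => by rw [hS a (Finset.mem_range.mp ha)])
    have eNW : ∑ b ∈ range n, wf (P.ll 0 b) = ∑ b ∈ range n, wf (Lbl.single (π.getD b 0)) :=
      Finset.sum_congr rfl (fun b hb => by rw [hNW b (Finset.mem_range.mp hb)])
    have eNE : ∑ a ∈ range n, wg (P.rl a (n - 1 - a))
        = ∑ a ∈ range n, wg (Lbl.single (ρ.getD a 0)) :=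
      Finset.sum_congr rfl (fun a ha => by rw [hNE a (Finset.mem_range.mp ha)])
    rw [eS, eNW, eNE] at hfl
    exact hfl
  have cπ : (π.count i : ℤ) = ∑ b ∈ Finset.range n, (if π.getD b 0 = i then (1 : ℤ) else 0) := by
    rw [BKContent.count_eq_sum, hπ]
  have cρ : (ρ.count i : ℤ) = ∑ a ∈ Finset.range n, (if ρ.getD a 0 = i then (1 : ℤ) else 0) := by
    rw [BKContent.count_eq_sum, hρ]
  have cσ : (σ.count i : ℤ) = ∑ a ∈ Finset.range n, (if σ.getD a 0 = i then (1 : ℤ) else 0) := by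
    rw [BKContent.count_eq_sum, hσ]
  have k1 := key (BKContent.w1h i) (BKContent.w1f i) (BKContent.w1g i)
    (BKContent.w1_up i) (BKContent.w1_down i)
  have k2 := key (BKContent.w2h i) (BKContent.w2f i) (BKContent.w2g i)
    (BKContent.w2_up i) (BKContent.w2_down i)
  simp only [BKContent.w1h, BKContent.w1f, BKContent.w1g, BKContent.w2h, BKContent.w2f,
    BKContent.w2g, Finset.sum_const_zero, Finset.sum_neg_distrib] at k1 k2
  constructor
  · have : (π.count i : ℤ) = (σ.count i : ℤ) := by
      rw [cπ, cσ]
      have := k2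
      simp only [← Finset.sum_neg_distrib] at this
      linarith [this]
    exact_mod_cast this
  · have : (ρ.count i : ℤ) = (σ.count i : ℤ) := by
      rw [cρ, cσ]
      linarith [k1]
    exact_mod_cast this
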